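/- arXiv:2403.00623 — 2 statements merged into one kernel-verified Lean document; each statement's English description precedes it below -/
import Mathlib

section
/- Let N ≥ 1, let x₁,…,x_N be points in ℝ^d, and let W : [0,∞) → ℝ be nonnegative with W(0) > 0. Define the particle volumes vᵢ = (Σ_{j=1}^N W(‖xᵢ − x_j‖))⁻¹ (each sum is positive since its diagonal term is W(0) > 0), the average particle volume v̄ = (Σ_{i=1}^N vᵢ)/N, fix any ṽ ≥ v̄, fix a total volume 𝒱 > 0 and set v₀ = 𝒱/N. Then the total error E = Σ_{i=1}^N Σ_{j=1}^N W(‖xᵢ − x_j‖) · v₀ · ṽ − 𝒱 satisfies E ≥ 𝒱·(ṽ/v̄ − 1) ≥ 0; in particular the total error is non-negative. -/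
open Finset

/-- Non-negativity of the total error `E`: with particle volumes
`vᵢ = (∑ⱼ W ‖xᵢ - xⱼ‖)⁻¹`, average volume `v̄ = (∑ᵢ vᵢ)/N`, any `ṽ ≥ v̄`,
total volume `𝒱 > 0` and `v₀ = 𝒱/N`, the total error
`E = ∑ᵢ∑ⱼ W ‖xᵢ - xⱼ‖ · v₀ · ṽ − 𝒱` satisfies `E ≥ 𝒱·(ṽ/v̄ − 1) ≥ 0`. -/
theorem total_error_nonneg {d N : ℕ} (hN : 1 ≤ N)
    (x : Fin N → EuclideanSpace ℝ (Fin d))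
    (W : ℝ → ℝ) (hWnn : ∀ r : ℝ, 0 ≤ r → 0 ≤ W r) (hW0 : 0 < W 0)
    (v : Fin N → ℝ) (hv : ∀ i, v i = (∑ j, W ‖x i - x j‖)⁻¹)
    (vbar : ℝ) (hvbar : vbar = (∑ i, v i) / N)
    (vtil : ℝ) (hvtil : vbar ≤ vtil)
    (V : ℝ) (hV : 0 < V)
    (v0 : ℝ) (hv0 : v0 = V / N)
    (E : ℝ) (hE : E = ∑ i, ∑ j, W ‖x i - x j‖ * v0 * vtil - V) :
    V * (vtil / vbar - 1) ≤ E ∧ 0 ≤ V * (vtil / vbar - 1) := by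
  set S : Fin N → ℝ := fun i => ∑ j, W ‖x i - x j‖ with hS
  have hNpos : (0:ℝ) < N := by exact_mod_cast hN
  have hSpos : ∀ i, 0 < S i := by
    intro i
    apply Finset.sum_pos' (fun j _ => hWnn _ (norm_nonneg _)) ⟨i, Finset.mem_univ i, ?_⟩
    simpa using hW0
  have hvpos : ∀ i, 0 < v i := fun i => by rw [hv i]; exact inv_pos.2 (hSpos i)
  have hvsum : 0 < ∑ i, v i :=
    Finset.sum_pos (fun i _ => hvpos i) (Finset.univ_nonempty_iff.2 ⟨⟨0, hN⟩⟩)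
  have hvbarpos : 0 < vbar := by rw [hvbar]; positivity
  have hvtilpos : 0 < vtil := hvbarpos.trans_le hvtil
  -- Cauchy–Schwarz: N² ≤ (∑ S i) * (∑ v i)
  have key : (N:ℝ)^2 ≤ (∑ i, S i) * (∑ i, v i) := by
    have cs := Finset.sum_mul_sq_le_sq_mul_sq Finset.univ
      (fun i => Real.sqrt (S i)) (fun i => Real.sqrt (v i))
    have h1 : ∀ i : Fin N, Real.sqrt (S i) * Real.sqrt (v i) = 1 := by
      intro i
      rw [← Real.sqrt_mul (hSpos i).le, hv i, mul_inv_cancel₀ (hSpos i).ne', Real.sqrt_one]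
    have h2 : ∀ i : Fin N, Real.sqrt (S i) ^ 2 = S i := fun i => Real.sq_sqrt (hSpos i).le
    have h3 : ∀ i : Fin N, Real.sqrt (v i) ^ 2 = v i := fun i => Real.sq_sqrt (hvpos i).le
    simp only [h1, h2, h3, Finset.sum_const, Finset.card_univ, Fintype.card_fin,
      nsmul_eq_mul, mul_one] at cs
    exact cs
  have hSsum : 0 < ∑ i, S i := Finset.sum_pos (fun i _ => hSpos i)
    (Finset.univ_nonempty_iff.2 ⟨⟨0, hN⟩⟩)
  have hE' : E = (∑ i, S i) * v0 * vtil - V := by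
    rw [hE]; congr 1
    rw [Finset.sum_mul, Finset.sum_mul]
    exact Finset.sum_congr rfl fun i _ => by rw [Finset.sum_mul, Finset.sum_mul]
  constructor
  · rw [hE', hv0, hvbar, mul_sub, mul_one, sub_le_sub_iff_right, div_div_eq_mul_div,
      ← mul_div_assoc, div_le_iff₀ hvsum]
    have hrw : (∑ i, S i) * (V / N) * vtil * (∑ i, v i)
        = ((∑ i, S i) * V * vtil * (∑ i, v i)) / N := by ring
    rw [hrw, le_div_iff₀ hNpos]
    nlinarith [key, mul_pos hV hvtilpos]
  · have h1 : 1 ≤ vtil / vbar := (one_le_div hvbarpos).2 hvtil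
    have := hV.le
    nlinarith
end

section
/- Let W₁ : ℝ → ℝ be a one-dimensional smoothing kernel with cut-off radius h > 0. Define the smoothed-analytical volume fraction P : [0,∞) → ℝ by P(a) = 1 − 2·∫_a^h W₁(r) dr (with the convention that the integral is 0 when a ≥ h). Then: (i) 0 ≤ P(a) ≤ 1 for all a ≥ 0; (ii) P is nondecreasing on [0,∞); (iii) P(a) = 0 if and only if a = 0; and (iv) P(a) = 1 if and only if a ≥ h. -/
/-- Properties of the smoothed-analytical volume fraction
`P(a) = 1 − 2·∫_a^h W₁(r) dr` for a 1D smoothing kernel `W₁` with cut-off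
radius `h`: `0 ≤ P ≤ 1` on `[0,∞)`, `P` is nondecreasing on `[0,∞)`,
`P(a) = 0 ↔ a = 0`, and `P(a) = 1 ↔ a ≥ h`. -/
theorem smoothed_volume_fraction_props (h : ℝ) (hh : 0 < h)
    (W₁ : ℝ → ℝ)
    (heven : ∀ r : ℝ, W₁ (-r) = W₁ r)
    (hnn : ∀ r : ℝ, 0 ≤ W₁ r)
    (hcont : Continuous W₁)
    (hzero : ∀ r : ℝ, h ≤ |r| → W₁ r = 0)
    (hpos : ∀ r : ℝ, |r| < h → 0 < W₁ r)
    (hint : (∫ r in (-h)..h, W₁ r) = 1)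
    (P : ℝ → ℝ) (hP : ∀ a : ℝ, P a = 1 - 2 * ∫ r in a..h, W₁ r) :
    (∀ a : ℝ, 0 ≤ a → 0 ≤ P a ∧ P a ≤ 1) ∧
    MonotoneOn P (Set.Ici 0) ∧
    (∀ a : ℝ, 0 ≤ a → (P a = 0 ↔ a = 0)) ∧
    (∀ a : ℝ, 0 ≤ a → (P a = 1 ↔ h ≤ a)) := by
  have hInt : ∀ a b : ℝ, IntervalIntegrable W₁ MeasureTheory.volume a b :=
    fun a b => hcont.intervalIntegrable a b
  have hsymm : ∫ r in (-h)..(0:ℝ), W₁ r = ∫ r in (0:ℝ)..h, W₁ r := by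
    have := intervalIntegral.integral_comp_neg (a := 0) (b := h) W₁
    simpa [heven] using this.symm
  have half : ∫ r in (0:ℝ)..h, W₁ r = 1/2 := by
    have hadd := intervalIntegral.integral_add_adjacent_intervals (hInt (-h) 0) (hInt 0 h)
    rw [hsymm, hint] at hadd
    linarith
  have hP2 : ∀ a : ℝ, P a = 2 * ∫ r in (0:ℝ)..a, W₁ r := by
    intro a
    have hadd := intervalIntegral.integral_add_adjacent_intervals (hInt 0 a) (hInt a h)
    rw [half] at hadd
    rw [hP a]; linarith
  have tail0 : ∀ a : ℝ, h ≤ a → ∫ r in a..h, W₁ r = 0 := by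
    intro a ha
    rw [intervalIntegral.integral_symm]
    have hz : ∫ r in h..a, W₁ r = ∫ r in h..a, (0:ℝ) := by
      apply intervalIntegral.integral_congr
      intro x hx
      rw [Set.uIcc_of_le ha] at hx
      exact hzero x ((le_abs_self x).trans' hx.1)
    simp [hz]
  have tailpos : ∀ a : ℝ, -h < a → a < h → 0 < ∫ r in a..h, W₁ r := by
    intro a ha1 ha2
    apply intervalIntegral.intervalIntegral_pos_of_pos_on (hInt a h) _ ha2
    intro x hx
    exact hpos x (abs_lt.2 ⟨lt_trans ha1 hx.1, hx.2⟩)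
  have headpos : ∀ a : ℝ, 0 < a → 0 < ∫ r in (0:ℝ)..a, W₁ r := by
    intro a ha
    rcases le_or_gt a h with hah | hha
    · apply intervalIntegral.intervalIntegral_pos_of_pos_on (hInt 0 a) _ ha
      intro x hx
      exact hpos x (abs_lt.2 ⟨by linarith [hx.1], lt_of_lt_of_le hx.2 hah⟩)
    · have hadd := intervalIntegral.integral_add_adjacent_intervals (hInt 0 h) (hInt h a)
      have h1 : 0 < ∫ r in (0:ℝ)..h, W₁ r := by rw [half]; norm_num
      have h2 : 0 ≤ ∫ r in h..a, W₁ r :=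
        intervalIntegral.integral_nonneg hha.le (fun x _ => hnn x)
      linarith
  refine ⟨?_, ?_, ?_, ?_⟩
  · intro a ha
    constructor
    · rw [hP2 a]
      have h2 : 0 ≤ ∫ r in (0:ℝ)..a, W₁ r :=
        intervalIntegral.integral_nonneg ha (fun x _ => hnn x)
      linarith
    · rw [hP a]
      have : 0 ≤ ∫ r in a..h, W₁ r := by
        rcases le_or_gt a h with hah | hha
        · exact intervalIntegral.integral_nonneg hah (fun x _ => hnn x)
        · rw [tail0 a hha.le]
      linarith
  · intro a ha b hb hab
    rw [hP2 a, hP2 b]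
    have hadd := intervalIntegral.integral_add_adjacent_intervals (hInt 0 a) (hInt a b)
    have h2 : 0 ≤ ∫ r in a..b, W₁ r :=
      intervalIntegral.integral_nonneg hab (fun x _ => hnn x)
    linarith
  · intro a ha
    rw [hP2 a]
    constructor
    · intro h0
      by_contra hne
      have hp := headpos a (lt_of_le_of_ne ha (Ne.symm hne))
      linarith
    · intro h0; subst h0; simp
  · intro a ha
    rw [hP a]
    constructor
    · intro h1
      by_contra hlt
      push_neg at hlt
      have := tailpos a (by linarith) hlt
      linarith
    · intro hha; rw [tail0 a hha]; ring
end
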